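/- Let G be a perfect graph. A set C = {ρ(W_0), ρ(W_1), ..., ρ(W_q)} of vertices of Stab(G), with the W_i distinct stable sets, is a clique of the 1-skeleton sk(Stab(G)) if and only if for all i ≠ j the induced subgraph of G on W_i △ W_j is a connected bipartite graph. -/

import Mathlib

/-!
For stable sets `W₁, W₂` let `D = W₁ ∆ W₂`; the induced graph `G[D]` is always bipartite, with
sides `W₁ \ W₂` and `W₂ \ W₁`.

If `G[D]` is disconnected, flipping one of its components `S` gives two further stable sets
`W₁ ∆ S` and `W₂ ∆ S` whose indicator vectors have the same midpoint as `ρ W₁` and `ρ W₂`, so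
`[ρ W₁, ρ W₂]` is not a face of `Stab(G)`.

If `G[D]` is connected, consider the linear functional
`x ↦ ∑_{v ∈ W₁ ∩ W₂} x v - ∑_{v ∉ W₁ ∪ W₂} x v + ∑_{a, b ∈ D adjacent} (x a + x b)`.
On a stable set `W` each term is bounded, and all bounds are attained exactly when
`W₁ ∩ W₂ ⊆ W ⊆ W₁ ∪ W₂` and every edge of `G[D]` has one end in `W`; since a connected bipartite
graph has only one bipartition, this forces `W = W₁` or `W = W₂`. Hence the segment is the face of
`Stab(G)` exposed by this functional.
-/

open Set

variable {V : Type*} [Fintype V]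

/-- A stable (independent) set of a graph. -/
def IsStable (G : SimpleGraph V) (W : Set V) : Prop := ∀ a ∈ W, ∀ b ∈ W, ¬ G.Adj a b

/-- The indicator vector of a subset. -/
noncomputable def rho (W : Set V) : V → ℝ := W.indicator 1

/-- The stable set polytope of a graph. -/
noncomputable def stabPolytope (G : SimpleGraph V) : Set (V → ℝ) :=
  convexHull ℝ {x | ∃ W : Set V, IsStable G W ∧ x = rho W}

/-- `conv {v, w}` is an edge (1-dimensional face) of the polytope `P`. -/
def IsEdgeOf (P : Set (V → ℝ)) (v w : V → ℝ) : Prop :=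
  v ≠ w ∧ IsExtreme ℝ P (segment ℝ v w)

/-- A graph is perfect if every induced subgraph has chromatic number equal to clique number. -/
def IsPerfect (G : SimpleGraph V) : Prop :=
  ∀ s : Set V, (G.induce s).chromaticNumber = ((G.induce s).cliqueNum : ℕ∞)

/-- The induced subgraph on `S` is a connected bipartite graph. -/
def ConnBipartiteIn (G : SimpleGraph V) (S : Set V) : Prop :=
  (G.induce S).Connected ∧ (G.induce S).Colorable 2

/-- The symmetric difference of two sets. -/
def sd (W W' : Set V) : Set V := (W \ W') ∪ (W' \ W)

open scoped symmDiff Finset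

section ConvexFaces

variable {E : Type*} [AddCommGroup E] [Module ℝ E]

theorem mem_convexHull_sep_eq_of_forall_le {s : Set E} {f : E →ₗ[ℝ] ℝ} {b : ℝ}
    (hs : ∀ y ∈ s, f y ≤ b) {x : E} (hx : x ∈ convexHull ℝ s) (hb : b ≤ f x) :
    x ∈ convexHull ℝ {y ∈ s | f y = b} := by
  set T := convexHull ℝ {y ∈ s | f y = b}
  have hle : convexHull ℝ s ⊆ {y | f y ≤ b} :=
    convexHull_min hs (convex_halfSpace_le f.isLinear b)
  -- a combination of points of `convexHull s` reaches level `b` only if both points do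
  have hconv : Convex ℝ {y ∈ convexHull ℝ s | f y = b → y ∈ T} := by
    rw [convex_iff_forall_pos]
    rintro y ⟨hys, hyT⟩ z ⟨hzs, hzT⟩ μ ν hμ hν hμν
    refine ⟨convex_convexHull ℝ s hys hzs hμ.le hν.le hμν, fun hw => ?_⟩
    simp only [map_add, map_smul, smul_eq_mul] at hw
    have hgap : μ * (b - f y) + ν * (b - f z) = 0 := by linear_combination b * hμν - hw
    obtain ⟨hy, hz⟩ := (add_eq_zero_iff_of_nonneg (mul_nonneg hμ.le (sub_nonneg.2 (hle hys)))
      (mul_nonneg hν.le (sub_nonneg.2 (hle hzs)))).1 hgap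
    exact convex_convexHull ℝ _
      (hyT (sub_eq_zero.1 ((mul_eq_zero.1 hy).resolve_left hμ.ne')).symm)
      (hzT (sub_eq_zero.1 ((mul_eq_zero.1 hz).resolve_left hν.ne')).symm) hμ.le hν.le hμν
  have hsub : s ⊆ {y ∈ convexHull ℝ s | f y = b → y ∈ T} := fun y hy =>
    ⟨subset_convexHull ℝ s hy, fun hyb => subset_convexHull ℝ _ ⟨hy, hyb⟩⟩
  exact (convexHull_min hsub hconv hx).2 (le_antisymm (hle hx) hb)

theorem ContinuousLinearMap.toExposed_convexHull [TopologicalSpace E] (l : StrongDual ℝ E)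
    {s : Set E} {b : ℝ} (hs : ∀ y ∈ s, l y ≤ b) (hb : ∃ y ∈ s, l y = b) :
    l.toExposed (convexHull ℝ s) = convexHull ℝ {y ∈ s | l y = b} := by
  have hle : convexHull ℝ s ⊆ {y | l y ≤ b} :=
    convexHull_min hs (convex_halfSpace_le l.toLinearMap.isLinear b)
  obtain ⟨y₀, hy₀, hly₀⟩ := hb
  ext x
  constructor
  · rintro ⟨hx, hmax⟩
    exact mem_convexHull_sep_eq_of_forall_le (f := (l : E →ₗ[ℝ] ℝ)) hs hx
      (hly₀ ▸ hmax y₀ (subset_convexHull ℝ s hy₀))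
  · intro hx
    have hxb : l x = b :=
      convexHull_min (fun y hy => hy.2) (convex_hyperplane l.toLinearMap.isLinear b) hx
    exact ⟨convexHull_mono (sep_subset _ _) hx, fun y hy => hxb ▸ hle hy⟩

end ConvexFaces

theorem SimpleGraph.Connected.coloring_eq_or_eq_not {α : Type*} {H : SimpleGraph α}
    (hH : H.Connected) (c c' : H.Coloring Bool) :
    (∀ v, c v = c' v) ∨ ∀ v, c v = !c' v := by
  obtain ⟨v₀⟩ := hH.nonempty
  have hpar (v : α) : (c v₀ = c v ↔ c' v₀ = c' v) := by
    obtain ⟨p⟩ := hH.preconnected v₀ v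
    rw [← Bool.coe_iff_coe (a := c v₀), ← Bool.coe_iff_coe (a := c' v₀),
      ← c.even_length_iff_congr p, ← c'.even_length_iff_congr p]
  by_cases h₀ : c v₀ = c' v₀
  · have : ∀ a a' b b' : Bool, (a = b ↔ a' = b') → a = a' → b = b' := by decide
    exact Or.inl fun v => this _ _ _ _ (hpar v) h₀
  · have : ∀ a a' b b' : Bool, (a = b ↔ a' = b') → a ≠ a' → b = !b' := by decide
    exact Or.inr fun v => this _ _ _ _ (hpar v) h₀

section

variable {V : Type*} {G : SimpleGraph V} {W W₁ W₂ S : Set V}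

theorem sd_eq_symmDiff (W W' : Set V) : sd W W' = W ∆ W' := rfl

open scoped Classical in
theorem rho_apply (W : Set V) (v : V) : rho W v = if v ∈ W then 1 else 0 := by
  simp [rho, indicator_apply]

theorem rho_injective : Function.Injective (rho : Set V → V → ℝ) :=
  fun _ _ h => indicator_one_inj ℝ h

theorem rho_mem_stabPolytope (hW : IsStable G W) : rho W ∈ stabPolytope G :=
  subset_convexHull ℝ _ ⟨W, hW, rfl⟩

theorem eq_or_eq_of_rho_mem_segment (h : rho W ∈ segment ℝ (rho W₁) (rho W₂)) :
    W = W₁ ∨ W = W₂ := by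
  -- a coordinate where `W` differs from one endpoint forces all the weight onto the other one
  have weight_eq_one {U₁ U₂ : Set V} {a b : ℝ} (hab : a + b = 1)
      (hx : a • rho U₁ + b • rho U₂ = rho W) (hne : W ≠ U₁) : b = 1 := by
    obtain ⟨p, hp⟩ : ∃ p, ¬ (p ∈ W ↔ p ∈ U₁) := by
      by_contra! h; exact hne (Set.ext h)
    have hxp := congrFun hx p
    simp only [Pi.add_apply, Pi.smul_apply, smul_eq_mul, rho_apply] at hxp
    by_cases h₁ : p ∈ U₁ <;> by_cases h₂ : p ∈ U₂ <;> simp_all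
  obtain ⟨a, b, -, -, hab, hx⟩ := h
  by_contra! hne
  have hb := weight_eq_one hab hx hne.1
  have ha := weight_eq_one ((add_comm b a).trans hab) ((add_comm _ _).trans hx) hne.2
  linarith

theorem rho_weight_mul_rho_le (W₁ W₂ W : Set V) (v : V) :
    (rho W₁ v + rho W₂ v - 1) * rho W v ≤ (rho W₁ v + rho W₂ v - 1) * rho W₁ v := by
  simp only [rho_apply]
  by_cases h : v ∈ W <;> by_cases h₁ : v ∈ W₁ <;> by_cases h₂ : v ∈ W₂ <;> simp [h, h₁, h₂]

theorem rho_add_rho_le_one (hW : IsStable G W) {a b : V} (hab : G.Adj a b) :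
    rho W a + rho W b ≤ 1 := by
  have := hW a
  simp only [rho_apply]
  by_cases ha : a ∈ W <;> by_cases hb : b ∈ W <;> simp_all

theorem rho_add_rho_eq_one_iff {a b : V} : rho W a + rho W b = 1 ↔ (a ∈ W ↔ b ∉ W) := by
  simp only [rho_apply]
  by_cases ha : a ∈ W <;> by_cases hb : b ∈ W <;> simp [ha, hb]

open scoped Classical in
noncomputable def membershipColoring (G : SimpleGraph V) (D S : Set V)
    (h : ∀ a ∈ D, ∀ b ∈ D, G.Adj a b → (a ∈ S ↔ b ∉ S)) : (G.induce D).Coloring Bool :=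
  SimpleGraph.Coloring.mk (fun v => decide (v.1 ∈ S)) fun {a b} hab => by
    have := h a a.2 b b.2 hab
    simp only [ne_eq, decide_eq_decide]
    tauto

open scoped Classical in
theorem membershipColoring_apply {D S : Set V}
    (h : ∀ a ∈ D, ∀ b ∈ D, G.Adj a b → (a ∈ S ↔ b ∉ S)) (v : D) :
    membershipColoring G D S h v = decide (v.1 ∈ S) := rfl

theorem IsStable.mem_iff_not_mem_of_adj (h₁ : IsStable G W₁) (h₂ : IsStable G W₂) :
    ∀ a ∈ W₁ ∆ W₂, ∀ b ∈ W₁ ∆ W₂, G.Adj a b → (a ∈ W₁ ↔ b ∉ W₁) := by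
  intro a ha b hb hab
  rw [mem_symmDiff] at ha hb
  have := h₁ a
  have := h₂ a
  tauto

theorem colorable_induce_symmDiff (h₁ : IsStable G W₁) (h₂ : IsStable G W₂) :
    (G.induce (W₁ ∆ W₂)).Colorable 2 :=
  (membershipColoring G _ W₁ (h₁.mem_iff_not_mem_of_adj h₂)).colorable

theorem eq_or_eq_compl_of_connected {D S T : Set V} (hD : (G.induce D).Connected)
    (hS : ∀ a ∈ D, ∀ b ∈ D, G.Adj a b → (a ∈ S ↔ b ∉ S))
    (hT : ∀ a ∈ D, ∀ b ∈ D, G.Adj a b → (a ∈ T ↔ b ∉ T)) :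
    (∀ v ∈ D, v ∈ S ↔ v ∈ T) ∨ ∀ v ∈ D, v ∈ S ↔ v ∉ T := by
  rcases hD.coloring_eq_or_eq_not (membershipColoring G D S hS) (membershipColoring G D T hT)
    with h | h
  · exact Or.inl fun v hv => by simpa [membershipColoring_apply] using h ⟨v, hv⟩
  · refine Or.inr fun v hv => ?_
    have := h ⟨v, hv⟩
    simp only [membershipColoring_apply, Bool.eq_not_iff, ne_eq, decide_eq_decide] at this
    tauto

theorem IsStable.symmDiff_of_closed (h₁ : IsStable G W₁) (h₂ : IsStable G W₂)
    (hS : S ⊆ W₁ ∆ W₂) (hcl : ∀ a ∈ S, ∀ b ∈ W₁ ∆ W₂, G.Adj a b → b ∈ S) :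
    IsStable G (W₁ ∆ S) := by
  -- an edge from `W₁ \ S` to `S \ W₁ ⊆ W₂` has its first end in `W₁ \ W₂`, so would leave `S`
  intro a ha b hb hab
  have := fun ha hb => h₁ a ha b hb hab
  have := fun ha hb => h₂ a ha b hb hab
  have := fun ha hb => hcl a ha b hb hab
  have := fun hb ha => hcl b hb a ha hab.symm
  have := @hS a
  have := @hS b
  simp only [mem_symmDiff] at *
  tauto

theorem rho_symmDiff_add_rho_symmDiff (hS : S ⊆ W₁ ∆ W₂) :
    rho (W₁ ∆ S) + rho (W₂ ∆ S) = rho W₁ + rho W₂ := by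
  ext v
  have := @hS v
  simp only [Pi.add_apply, rho_apply]
  by_cases h₁ : v ∈ W₁ <;> by_cases h₂ : v ∈ W₂ <;> by_cases h : v ∈ S <;> simp_all [mem_symmDiff]

theorem eq_empty_or_eq_symmDiff_of_isEdgeOf (h₁ : IsStable G W₁) (h₂ : IsStable G W₂)
    (h : IsEdgeOf (stabPolytope G) (rho W₁) (rho W₂)) (hS : S ⊆ W₁ ∆ W₂)
    (hcl : ∀ a ∈ S, ∀ b ∈ W₁ ∆ W₂, G.Adj a b → b ∈ S) :
    S = ∅ ∨ S = W₁ ∆ W₂ := by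
  have hS' : S ⊆ W₂ ∆ W₁ := symmDiff_comm W₁ W₂ ▸ hS
  have hmid : (1 / 2 : ℝ) • rho W₁ + (1 / 2 : ℝ) • rho W₂ ∈
      openSegment ℝ (rho (W₁ ∆ S)) (rho (W₂ ∆ S)) :=
    ⟨1 / 2, 1 / 2, by norm_num, by norm_num, by norm_num, by
      rw [← smul_add, ← smul_add, rho_symmDiff_add_rho_symmDiff hS]⟩
  have hmem := h.2.left_mem_of_mem_openSegment
    (rho_mem_stabPolytope (h₁.symmDiff_of_closed h₂ hS hcl))
    (rho_mem_stabPolytope (h₂.symmDiff_of_closed h₁ hS' (symmDiff_comm W₁ W₂ ▸ hcl)))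
    ⟨1 / 2, 1 / 2, by norm_num, by norm_num, by norm_num, rfl⟩ hmid
  rcases eq_or_eq_of_rho_mem_segment hmem with h | h
  · exact Or.inl (symmDiff_eq_left.1 h)
  · exact Or.inr (h ▸ symmDiff_symmDiff_cancel_left W₁ S).symm

theorem connected_of_isEdgeOf (h₁ : IsStable G W₁) (h₂ : IsStable G W₂)
    (h : IsEdgeOf (stabPolytope G) (rho W₁) (rho W₂)) : (G.induce (W₁ ∆ W₂)).Connected := by
  have hne : (W₁ ∆ W₂).Nonempty :=
    nonempty_iff_ne_empty.2 fun h' => h.1 (congrArg rho (symmDiff_eq_bot.1 h'))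
  refine (SimpleGraph.connected_iff _).2 ⟨fun u v => ?_, hne.to_subtype⟩
  by_contra huv
  set S : Set V := Subtype.val '' {w | (G.induce (W₁ ∆ W₂)).Reachable u w}
  have hcl : ∀ a ∈ S, ∀ b ∈ W₁ ∆ W₂, G.Adj a b → b ∈ S := by
    rintro _ ⟨a, hua, rfl⟩ b hb hab
    exact ⟨⟨b, hb⟩, hua.trans (SimpleGraph.Adj.reachable (by exact hab)), rfl⟩
  rcases eq_empty_or_eq_symmDiff_of_isEdgeOf h₁ h₂ h (by rintro _ ⟨w, -, rfl⟩; exact w.2) hcl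
    with hS | hS
  · have hu : u.1 ∈ S := mem_image_of_mem _ (SimpleGraph.Reachable.refl u)
    rw [hS] at hu
    exact hu
  · have hv : v.1 ∈ S := hS.symm ▸ v.2
    obtain ⟨w, huw, hw⟩ := hv
    exact huv (Subtype.val_injective hw ▸ huw)

end

section

variable {V : Type*} [Fintype V] {G : SimpleGraph V} {W W₁ W₂ : Set V}

noncomputable def vertexFunctional (W₁ W₂ : Set V) : StrongDual ℝ (V → ℝ) :=
  ∑ v, (rho W₁ v + rho W₂ v - 1) • ContinuousLinearMap.proj v

open scoped Classical in
noncomputable def inducedDarts (G : SimpleGraph V) (D : Set V) : Finset (V × V) :=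
  {p | p.1 ∈ D ∧ p.2 ∈ D ∧ G.Adj p.1 p.2}

noncomputable def dartFunctional (G : SimpleGraph V) (D : Set V) : StrongDual ℝ (V → ℝ) :=
  ∑ p ∈ inducedDarts G D,
    (ContinuousLinearMap.proj (R := ℝ) (φ := fun _ : V => ℝ) p.1 + ContinuousLinearMap.proj p.2)

noncomputable def segmentFunctional (G : SimpleGraph V) (W₁ W₂ : Set V) : StrongDual ℝ (V → ℝ) :=
  vertexFunctional W₁ W₂ + dartFunctional G (W₁ ∆ W₂)

theorem vertexFunctional_apply (x : V → ℝ) :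
    vertexFunctional W₁ W₂ x = ∑ v, (rho W₁ v + rho W₂ v - 1) * x v := by
  simp [vertexFunctional]

theorem dartFunctional_apply (D : Set V) (x : V → ℝ) :
    dartFunctional G D x = ∑ p ∈ inducedDarts G D, (x p.1 + x p.2) := by
  simp [dartFunctional]

theorem mem_inducedDarts {D : Set V} {p : V × V} :
    p ∈ inducedDarts G D ↔ p.1 ∈ D ∧ p.2 ∈ D ∧ G.Adj p.1 p.2 := by
  simp [inducedDarts]

theorem vertexFunctional_rho_le (W : Set V) :
    vertexFunctional W₁ W₂ (rho W) ≤ vertexFunctional W₁ W₂ (rho W₁) := by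
  simp only [vertexFunctional_apply]
  exact Finset.sum_le_sum fun v _ => rho_weight_mul_rho_le W₁ W₂ W v

theorem vertexFunctional_rho_right :
    vertexFunctional W₁ W₂ (rho W₂) = vertexFunctional W₁ W₂ (rho W₁) := by
  simp only [vertexFunctional_apply]
  refine Finset.sum_congr rfl fun v _ => ?_
  simp only [rho_apply]
  by_cases h₁ : v ∈ W₁ <;> by_cases h₂ : v ∈ W₂ <;> simp [h₁, h₂]

theorem subset_of_vertexFunctional_rho_eq
    (h : vertexFunctional W₁ W₂ (rho W) = vertexFunctional W₁ W₂ (rho W₁)) :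
    W₁ ∩ W₂ ⊆ W ∧ W ⊆ W₁ ∪ W₂ := by
  simp only [vertexFunctional_apply] at h
  have hv := (Finset.sum_eq_sum_iff_of_le fun v _ => rho_weight_mul_rho_le W₁ W₂ W v).1 h
  constructor
  · rintro v ⟨h₁, h₂⟩
    by_contra hW
    simpa [rho_apply, h₁, h₂, hW] using hv v (Finset.mem_univ v)
  · intro v hW
    by_contra h
    rw [mem_union, not_or] at h
    simpa [rho_apply, h.1, h.2, hW] using hv v (Finset.mem_univ v)

theorem dartFunctional_rho_le (hW : IsStable G W) (D : Set V) :
    dartFunctional G D (rho W) ≤ #(inducedDarts G D) := by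
  rw [dartFunctional_apply, Finset.card_eq_sum_ones, Nat.cast_sum, Nat.cast_one]
  exact Finset.sum_le_sum fun p hp => rho_add_rho_le_one hW (mem_inducedDarts.1 hp).2.2

theorem dartFunctional_rho_eq_card_iff (hW : IsStable G W) (D : Set V) :
    dartFunctional G D (rho W) = #(inducedDarts G D) ↔
      ∀ a ∈ D, ∀ b ∈ D, G.Adj a b → (a ∈ W ↔ b ∉ W) := by
  rw [dartFunctional_apply, Finset.card_eq_sum_ones, Nat.cast_sum, Nat.cast_one,
    Finset.sum_eq_sum_iff_of_le fun p hp => rho_add_rho_le_one hW (mem_inducedDarts.1 hp).2.2]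
  simp only [mem_inducedDarts, rho_add_rho_eq_one_iff, and_imp, Prod.forall]
  exact ⟨fun h a ha b hb => h a b ha hb, fun h a b ha hb => h a ha b hb⟩

theorem segmentFunctional_rho_left (h₁ : IsStable G W₁) (h₂ : IsStable G W₂) :
    segmentFunctional G W₁ W₂ (rho W₁) =
      vertexFunctional W₁ W₂ (rho W₁) + #(inducedDarts G (W₁ ∆ W₂)) := by
  rw [segmentFunctional, add_apply,
    (dartFunctional_rho_eq_card_iff h₁ _).2 (h₁.mem_iff_not_mem_of_adj h₂)]

theorem segmentFunctional_rho_right (h₁ : IsStable G W₁) (h₂ : IsStable G W₂) :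
    segmentFunctional G W₁ W₂ (rho W₂) = segmentFunctional G W₁ W₂ (rho W₁) := by
  have halt := h₂.mem_iff_not_mem_of_adj h₁
  rw [symmDiff_comm] at halt
  rw [segmentFunctional_rho_left h₁ h₂, segmentFunctional, add_apply,
    (dartFunctional_rho_eq_card_iff h₂ _).2 halt, vertexFunctional_rho_right]

theorem segmentFunctional_rho_le (h₁ : IsStable G W₁) (h₂ : IsStable G W₂) (hW : IsStable G W) :
    segmentFunctional G W₁ W₂ (rho W) ≤ segmentFunctional G W₁ W₂ (rho W₁) := by
  rw [segmentFunctional_rho_left h₁ h₂, segmentFunctional, add_apply]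
  exact add_le_add (vertexFunctional_rho_le W) (dartFunctional_rho_le hW _)

theorem eq_or_eq_of_segmentFunctional_rho_eq (h₁ : IsStable G W₁) (h₂ : IsStable G W₂)
    (hconn : (G.induce (W₁ ∆ W₂)).Connected) (hW : IsStable G W)
    (heq : segmentFunctional G W₁ W₂ (rho W) = segmentFunctional G W₁ W₂ (rho W₁)) :
    W = W₁ ∨ W = W₂ := by
  rw [segmentFunctional_rho_left h₁ h₂, segmentFunctional, add_apply] at heq
  have hvert := vertexFunctional_rho_le (W₁ := W₁) (W₂ := W₂) W
  have hdart := dartFunctional_rho_le hW (W₁ ∆ W₂)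
  obtain ⟨hI, hU⟩ := subset_of_vertexFunctional_rho_eq (W := W) (by linarith)
  have halt := (dartFunctional_rho_eq_card_iff hW _).1 (by linarith)
  rcases eq_or_eq_compl_of_connected hconn halt (h₁.mem_iff_not_mem_of_adj h₂) with h | h
  all_goals
    have hv (v : V) := And.intro (@hI v) (And.intro (@hU v) (h v))
    simp only [mem_symmDiff, mem_inter_iff, mem_union] at hv
  · exact Or.inl (Set.ext fun v => by have := hv v; tauto)
  · exact Or.inr (Set.ext fun v => by have := hv v; tauto)

theorem isEdgeOf_of_connected (h₁ : IsStable G W₁) (h₂ : IsStable G W₂)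
    (hconn : (G.induce (W₁ ∆ W₂)).Connected) : IsEdgeOf (stabPolytope G) (rho W₁) (rho W₂) := by
  obtain ⟨⟨v, hv⟩⟩ := hconn.nonempty
  refine ⟨rho_injective.ne fun h => ?_, ?_⟩
  · simp [h] at hv
  set l := segmentFunctional G W₁ W₂
  have hface : {y ∈ {x | ∃ W, IsStable G W ∧ x = rho W} | l y = l (rho W₁)} =
      {rho W₁, rho W₂} := by
    ext y
    constructor
    · rintro ⟨⟨W, hW, rfl⟩, hy⟩
      rcases eq_or_eq_of_segmentFunctional_rho_eq h₁ h₂ hconn hW hy with rfl | rfl <;> simp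
    · rintro (rfl | rfl)
      · exact ⟨⟨W₁, h₁, rfl⟩, rfl⟩
      · exact ⟨⟨W₂, h₂, rfl⟩, segmentFunctional_rho_right h₁ h₂⟩
  have hexp : l.toExposed (stabPolytope G) = segment ℝ (rho W₁) (rho W₂) := by
    have hle : ∀ y ∈ {x | ∃ W, IsStable G W ∧ x = rho W}, l y ≤ l (rho W₁) := by
      rintro _ ⟨W, hW, rfl⟩
      exact segmentFunctional_rho_le h₁ h₂ hW
    rw [stabPolytope, l.toExposed_convexHull hle ⟨_, ⟨W₁, h₁, rfl⟩, rfl⟩, hface, convexHull_pair]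
  exact hexp ▸ ContinuousLinearMap.toExposed.isExposed.isExtreme

theorem isEdgeOf_stabPolytope_iff (h₁ : IsStable G W₁) (h₂ : IsStable G W₂) :
    IsEdgeOf (stabPolytope G) (rho W₁) (rho W₂) ↔ ConnBipartiteIn G (sd W₁ W₂) := by
  rw [ConnBipartiteIn, sd_eq_symmDiff]
  exact ⟨fun h => ⟨connected_of_isEdgeOf h₁ h₂ h, colorable_induce_symmDiff h₁ h₂⟩,
    fun h => isEdgeOf_of_connected h₁ h₂ h.1⟩

end

theorem stable_clique_iff_general (G : SimpleGraph V) (q : ℕ)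
    (W : Fin (q + 1) → Set V) (hW : ∀ i, IsStable G (W i)) :
    (∀ i j, i ≠ j → IsEdgeOf (stabPolytope G) (rho (W i)) (rho (W j))) ↔
      (∀ i j, i ≠ j → ConnBipartiteIn G (sd (W i) (W j))) :=
  forall₂_congr fun i j => imp_congr_right fun _ => isEdgeOf_stabPolytope_iff (hW i) (hW j)

theorem stable_clique_iff (G : SimpleGraph V) (hG : IsPerfect G) (q : ℕ)
    (W : Fin (q + 1) → Set V) (hW : ∀ i, IsStable G (W i)) (hinj : Function.Injective W) :
    (∀ i j, i ≠ j → IsEdgeOf (stabPolytope G) (rho (W i)) (rho (W j))) ↔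
      (∀ i j, i ≠ j → ConnBipartiteIn G (sd (W i) (W j))) :=
  stable_clique_iff_general G q W hW
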